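/- Let S be a finite nonempty set, let Λ : S × S → ℝ be a continuous-time Markov transition rate matrix, i.e. λ_{s,s'} ≥ 0 for all s ≠ s' and Σ_{s'∈S} λ_{s,s'} = 0 for every s, and suppose Λ is irreducible in the sense that its rank (as a real matrix) equals |S| − 1. Let p : S → ℝ be a stationary distribution of Λ, i.e. p_s > 0 for all s, Σ_{s∈S} p_s = 1, and Σ_{s∈S} p_s λ_{s,s'} = 0 for every s'. Then for every vector z : S → ℝ there exists a vector b : S → ℝ with b_s ≥ 0 for all s such that z_s + Σ_{s'∈S} λ_{s,s'} (b_{s'} − b_s) = Σ_{s'∈S} p_{s'} z_{s'} for every s ∈ S. -/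
import Mathlib


/-- Lemma `as`: for an irreducible transition rate matrix `Λ` with stationary
distribution `p`, the Poisson-type system
`z s + Σ_{s'} Λ s s' * (b s' - b s) = Σ_{s'} p s' * z s'`
has a nonnegative solution `b`. -/
theorem poisson_system_nonneg_solution
    {S : Type*} [Fintype S] [Nonempty S] [DecidableEq S]
    (Λ : Matrix S S ℝ)
    (hoff : ∀ s s' : S, s ≠ s' → 0 ≤ Λ s s')
    (hrow : ∀ s : S, ∑ s' : S, Λ s s' = 0)
    (hrank : Λ.rank = Fintype.card S - 1)
    (p : S → ℝ)
    (hp_pos : ∀ s : S, 0 < p s)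
    (hp_sum : ∑ s : S, p s = 1)
    (hp_stat : ∀ s' : S, ∑ s : S, p s * Λ s s' = 0)
    (z : S → ℝ) :
    ∃ b : S → ℝ, (∀ s : S, 0 ≤ b s) ∧
      ∀ s : S, z s + ∑ s' : S, Λ s s' * (b s' - b s) = ∑ s' : S, p s' * z s' := by
  classical
  -- the linear functional y ↦ ∑ p s * y s
  set φ : (S → ℝ) →ₗ[ℝ] ℝ := ∑ s : S, p s • (LinearMap.proj s) with hφ
  have hφ_apply : ∀ y : S → ℝ, φ y = ∑ s : S, p s * y s := by
    intro y
    simp [hφ, LinearMap.sum_apply]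
  -- φ is surjective
  have hφ_surj : LinearMap.range φ = ⊤ := by
    rw [LinearMap.range_eq_top]
    intro r
    refine ⟨fun _ => r, ?_⟩
    rw [hφ_apply]
    simp [← Finset.sum_mul, hp_sum]
  have hkerφ : Module.finrank ℝ (LinearMap.ker φ) = Fintype.card S - 1 := by
    have h := LinearMap.finrank_range_add_finrank_ker φ
    rw [hφ_surj] at h
    simp [Module.finrank_pi] at h
    omega
  -- range of mulVecLin ⊆ ker φ
  have hle : LinearMap.range Λ.mulVecLin ≤ LinearMap.ker φ := by
    rintro y ⟨x, rfl⟩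
    rw [LinearMap.mem_ker, hφ_apply]
    simp only [Matrix.mulVecLin_apply, Matrix.mulVec, dotProduct, Finset.mul_sum]
    rw [Finset.sum_comm]
    calc ∑ s' : S, ∑ s : S, p s * (Λ s s' * x s')
        = ∑ s' : S, (∑ s : S, p s * Λ s s') * x s' := by
          refine Finset.sum_congr rfl fun s' _ => ?_
          rw [Finset.sum_mul]
          refine Finset.sum_congr rfl fun s _ => by ring
      _ = 0 := by simp [hp_stat]
  have heq : LinearMap.range Λ.mulVecLin = LinearMap.ker φ := by
    apply Submodule.eq_of_le_of_finrank_le hle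
    rw [hkerφ]
    exact le_of_eq hrank.symm
  -- the target vector
  set c : S → ℝ := fun s => (∑ s' : S, p s' * z s') - z s with hc
  have hcmem : c ∈ LinearMap.ker φ := by
    rw [LinearMap.mem_ker, hφ_apply, hc]
    simp only [mul_sub]
    rw [Finset.sum_sub_distrib, ← Finset.sum_mul, hp_sum, one_mul, sub_self]
  rw [← heq] at hcmem
  obtain ⟨b0, hb0⟩ := hcmem
  -- shift to make nonnegative
  obtain ⟨m, hm⟩ := Finset.exists_min_image Finset.univ b0 ⟨Classical.arbitrary S, Finset.mem_univ _⟩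
  refine ⟨fun s => b0 s - b0 m, fun s => by
    exact sub_nonneg.mpr (hm.2 s (Finset.mem_univ s)), ?_⟩
  intro s
  have hΛb0 : ∑ s' : S, Λ s s' * b0 s' = c s := by
    have := congrFun hb0 s
    simpa [Matrix.mulVecLin_apply, Matrix.mulVec, dotProduct] using this
  have : ∑ s' : S, Λ s s' * ((b0 s' - b0 m) - (b0 s - b0 m))
      = ∑ s' : S, Λ s s' * b0 s' - (∑ s' : S, Λ s s') * b0 s := by
    rw [Finset.sum_mul, ← Finset.sum_sub_distrib]
    congr 1; ext s'; ring
  rw [this, hrow s, hΛb0, hc]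
  ring
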